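/- arXiv:2410.10892 — 2 statements merged into one kernel-verified Lean document; each statement's English description precedes it below -/
import Mathlib

section
/- Let m ≤ n and let X₁, …, X_m be i.i.d. samples from the uniform distribution on [n]. Let S = (1/2)·Σ_{i=1}^n |N_i/m − 1/n| where N_i counts occurrences of i. Then n·E[S] ≤ n − m + m²/n. -/
open MeasureTheory Finset

lemma aux_pow (x : ℝ) (hx : 1 ≤ x) (m : ℕ) :
    ((x - 1)/x)^m ≤ 1 - m/x + m^2/x^2 := by
  have hx0 : 0 < x := lt_of_lt_of_le one_pos hx
  induction m with
  | zero => simp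
  | succ m ih =>
    have ha : 0 ≤ (x-1)/x := div_nonneg (by linarith) hx0.le
    have h2 : ((x-1)/x)^(m+1) ≤ (1 - m/x + m^2/x^2) * ((x-1)/x) := by
      rw [pow_succ]
      exact mul_le_mul_of_nonneg_right ih ha
    have key : (1 - (m:ℝ)/x + (m:ℝ)^2/x^2) * ((x-1)/x)
        = 1 - ((m:ℝ)+1)/x + ((m:ℝ)+1)^2/x^2 - (((m:ℝ)+1)/x^2 + (m:ℝ)^2/x^3) := by
      field_simp
      ring
    have hpos : 0 ≤ ((m:ℝ)+1)/x^2 + (m:ℝ)^2/x^3 := by positivity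
    push_cast
    rw [key] at h2
    linarith

lemma S_pointwise (n m : ℕ) (hm : 0 < m) (hmn : m ≤ n) (ω : Fin m → Fin n) :
    (1/2 : ℝ) * ∑ i : Fin n,
      |((Finset.univ.filter (fun j => ω j = i)).card : ℝ) / m - 1 / n|
    = ((Finset.univ.filter
        (fun i : Fin n => (Finset.univ.filter (fun j => ω j = i)).card = 0)).card : ℝ) / n := by
  have hn : 0 < n := lt_of_lt_of_le hm hmn
  set c : Fin n → ℕ := fun i => (Finset.univ.filter (fun j => ω j = i)).card with hc
  have hsum : ∑ i : Fin n, c i = m := by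
    rw [← Finset.card_eq_sum_card_fiberwise (f := ω) (fun x _ => mem_univ (ω x))]
    simp
  set Z := (Finset.univ.filter (fun i : Fin n => c i = 0)).card with hZ
  set W := (Finset.univ.filter (fun i : Fin n => ¬ c i = 0)).card with hW
  have hZW : Z + W = n := by
    rw [hZ, hW, Finset.card_filter_add_card_filter_not]
    simp
  have hsplit : ∑ i : Fin n, |((c i : ℝ)) / m - 1 / n|
      = ∑ i ∈ Finset.univ.filter (fun i => c i = 0), |((c i : ℝ)) / m - 1 / n|
      + ∑ i ∈ Finset.univ.filter (fun i => ¬ c i = 0), |((c i : ℝ)) / m - 1 / n| :=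
    (Finset.sum_filter_add_sum_filter_not _ _ _).symm
  have h1 : ∑ i ∈ Finset.univ.filter (fun i => c i = 0), |((c i : ℝ)) / m - 1 / n|
      = Z * (1/n) := by
    rw [Finset.sum_congr rfl (fun i hi => ?_), Finset.sum_const, nsmul_eq_mul]
    have h0 : c i = 0 := (Finset.mem_filter.1 hi).2
    rw [h0]
    rw [show ((0:ℕ):ℝ)/m - 1/n = -(1/n) by push_cast; ring, abs_neg,
      abs_of_nonneg (by positivity)]
  have h2 : ∑ i ∈ Finset.univ.filter (fun i => ¬ c i = 0), |((c i : ℝ)) / m - 1 / n|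
      = 1 - W * (1/n) := by
    have hterm : ∀ i ∈ Finset.univ.filter (fun i => ¬ c i = 0),
        |((c i : ℝ)) / m - 1 / n| = (c i : ℝ) / m - 1 / n := by
      intro i hi
      have h0 : 1 ≤ c i := Nat.one_le_iff_ne_zero.2 (Finset.mem_filter.1 hi).2
      have hge : (1:ℝ)/n ≤ (c i : ℝ)/m :=
        div_le_div₀ (by positivity) (by exact_mod_cast h0) (by exact_mod_cast hm)
          (by exact_mod_cast hmn)
      rw [abs_of_nonneg (by linarith)]
    rw [Finset.sum_congr rfl hterm, Finset.sum_sub_distrib, Finset.sum_const,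
      nsmul_eq_mul, ← Finset.sum_div]
    have hcsum : ∑ i ∈ Finset.univ.filter (fun i => ¬ c i = 0), ((c i : ℝ)) = m := by
      rw [← Nat.cast_sum]
      norm_cast
      rw [Finset.sum_filter_ne_zero]
      exact hsum
    rw [hcsum, div_self (by exact_mod_cast hm.ne')]
  have hZn : (Z:ℝ) + W = n := by exact_mod_cast hZW
  have hWn : (W:ℝ) = n - Z := by linarith
  have hn' : (n:ℝ) ≠ 0 := by exact_mod_cast hn.ne'
  rw [hsplit, h1, h2, hWn]
  field_simp
  ring

lemma prob_nu (n : ℕ) (hn : 0 < n) :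
    IsProbabilityMeasure ((n:ENNReal)⁻¹ • (Measure.count : Measure (Fin n))) := by
  constructor
  rw [Measure.smul_apply, smul_eq_mul, Measure.count_univ]
  simp only [ENat.card_eq_coe_fintype_card, Fintype.card_fin, ENat.toENNReal_coe]
  exact ENNReal.inv_mul_cancel (by exact_mod_cast hn.ne') (ENNReal.natCast_ne_top n)

/-- For `m ≤ n` i.i.d. samples from the uniform distribution on `[n]`,
the TV statistic `S` satisfies `n · E[S] ≤ n - m + m²/n`. -/
theorem stmt_14 (n m : ℕ) (hm : 0 < m) (hmn : m ≤ n) :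
    let S : (Fin m → Fin n) → ℝ := fun ω =>
      (1 / 2) * ∑ i : Fin n,
        |((Finset.univ.filter (fun j => ω j = i)).card : ℝ) / m - 1 / n|
    let μ : Measure (Fin m → Fin n) :=
      Measure.pi fun _ => (n : ENNReal)⁻¹ • (Measure.count : Measure (Fin n))
    (n : ℝ) * ∫ ω, S ω ∂μ ≤ (n : ℝ) - m + m ^ 2 / n := by
  intro S μ
  classical
  have hn : 0 < n := lt_of_lt_of_le hm hmn
  have hn' : (n:ℝ) ≠ 0 := by exact_mod_cast hn.ne'
  set ν : Measure (Fin n) := (n:ENNReal)⁻¹ • (Measure.count : Measure (Fin n)) with hν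
  haveI : IsProbabilityMeasure ν := prob_nu n hn
  have hμ : μ = Measure.pi fun _ : Fin m => ν := rfl
  haveI : IsProbabilityMeasure μ := by
    constructor
    rw [hμ, Measure.pi_univ]
    simp [(prob_nu n hn).measure_univ]
  set A : Fin n → Set (Fin m → Fin n) :=
    fun i => Set.pi Set.univ (fun _ : Fin m => ({i}ᶜ : Set (Fin n))) with hA
  have hAmeas : ∀ i, MeasurableSet (A i) := fun i =>
    MeasurableSet.pi Set.countable_univ (fun j _ => (measurableSet_singleton i).compl)
  have hνc : ∀ i : Fin n, ν ({i}ᶜ) = (n:ENNReal)⁻¹ * (n - 1 : ℕ) := by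
    intro i
    rw [hν, Measure.smul_apply, smul_eq_mul,
      measure_compl (measurableSet_singleton i) (measure_ne_top _ _),
      Measure.count_univ, Measure.count_singleton]
    congr 1
    simp [ENNReal.natCast_sub]
  have hμA : ∀ i : Fin n, μ (A i) = ((n:ENNReal)⁻¹ * (n - 1 : ℕ))^m := by
    intro i
    rw [hμ, hA, Measure.pi_pi]
    simp [hνc i]
  -- rewrite S pointwise as sum of indicators
  have hS : ∀ ω, S ω = ∑ i : Fin n, (A i).indicator (fun _ => (n:ℝ)⁻¹) ω := by
    intro ω
    have h1 : S ω = ((Finset.univ.filter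
        (fun i : Fin n => (Finset.univ.filter (fun j => ω j = i)).card = 0)).card : ℝ) / n :=
      S_pointwise n m hm hmn ω
    rw [h1]
    have h2 : ∀ i : Fin n, (A i).indicator (fun _ => (n:ℝ)⁻¹) ω
        = if (Finset.univ.filter (fun j => ω j = i)).card = 0 then (n:ℝ)⁻¹ else 0 := by
      intro i
      rw [Set.indicator_apply]
      congr 1
      simp only [hA, Set.mem_pi, Set.mem_univ, Set.mem_compl_iff, Set.mem_singleton_iff,
        forall_true_left, eq_iff_iff, Finset.card_eq_zero, Finset.filter_eq_empty_iff,
        Finset.mem_univ, forall_const]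
    rw [Finset.sum_congr rfl (fun i _ => h2 i), ← Finset.sum_filter,
      Finset.sum_const, nsmul_eq_mul, div_eq_mul_inv]
  -- compute the integral
  have hint : ∫ ω, S ω ∂μ = ∑ i : Fin n, (μ (A i)).toReal * (n:ℝ)⁻¹ := by
    rw [integral_congr_ae (Filter.Eventually.of_forall hS),
      integral_finset_sum _ (fun i _ => (integrable_const _).indicator (hAmeas i))]
    exact Finset.sum_congr rfl fun i _ => by
      rw [integral_indicator_const _ (hAmeas i), smul_eq_mul, measureReal_def]
  have htoReal : ∀ i : Fin n, (μ (A i)).toReal = (((n:ℝ) - 1)/n)^m := by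
    intro i
    rw [hμA i, ENNReal.toReal_pow, ENNReal.toReal_mul, ENNReal.toReal_inv]
    simp only [ENNReal.toReal_natCast]
    rw [Nat.cast_sub hn, Nat.cast_one]
    ring_nf
  rw [hint, Finset.sum_congr rfl (fun i _ => by rw [htoReal i]), Finset.sum_const,
    Finset.card_univ, Fintype.card_fin, nsmul_eq_mul]
  have hkey := aux_pow (n:ℝ) (by exact_mod_cast hn) m
  have hfin : (n:ℝ) * (1 - m/n + (m:ℝ)^2/n^2) = (n:ℝ) - m + m^2/n := by
    field_simp
  calc (n:ℝ) * ((n:ℝ) * ((((n:ℝ)-1)/n)^m * (n:ℝ)⁻¹))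
      = (n:ℝ) * (((n:ℝ)-1)/n)^m := by field_simp
    _ ≤ (n:ℝ) * (1 - m/n + (m:ℝ)^2/n^2) :=
        mul_le_mul_of_nonneg_left hkey (by positivity)
    _ = (n:ℝ) - m + m^2/n := hfin
end

section
/- Let X₁, …, X_m be i.i.d. samples from a distribution p on [n], and let Yⱼ indicate that the j-th sample equals some earlier sample. If for some element k, p_k ≥ (3/m)·log(10n/ρ) for ρ ∈ (0,1/2) and n ≥ 1, then 4·Σ_{j=1}^{m} E[Yⱼ] ≥ m·Σ_{k heavy} p_k, where the sum is over all k with p_k ≥ (3/m)·log(10n/ρ). -/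
open MeasureTheory
open scoped ENNReal

private lemma aux_pow_le_tenth (q : ℝ) (j : ℕ) (hq0 : 0 ≤ q) (hq1 : q ≤ 1)
    (h : Real.log 10 ≤ q * j) : (1 - q) ^ j ≤ 1 / 10 := by
  have h1 : (1 - q) ^ j ≤ Real.exp (-q) ^ j := by
    apply pow_le_pow_left₀ (by linarith)
    have := Real.add_one_le_exp (-q); linarith
  have h2 : Real.exp (-q) ^ j = Real.exp (-(q * j)) := by
    rw [← Real.exp_nat_mul]; ring_nf
  calc (1 - q) ^ j ≤ Real.exp (-(q * j)) := h2 ▸ h1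
    _ ≤ Real.exp (-(Real.log 10)) := Real.exp_le_exp.2 (by linarith)
    _ = 1 / 10 := by rw [Real.exp_neg, Real.exp_log (by norm_num)]; norm_num

/-- If some element is heavy (mass at least `(3/m)·log(10n/ρ)`), then four times the
expected number of collisions dominates `m` times the total heavy mass. -/
theorem stmt_15 (n m : ℕ) (hm : 0 < m) (hn : 1 ≤ n) (ρ : ℝ)
    (hρ : ρ ∈ Set.Ioo (0:ℝ) (1/2)) (p : PMF (Fin n))
    (hheavy : ∃ k : Fin n, (3 / m) * Real.log (10 * n / ρ) ≤ (p k).toReal) :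
    let μ : Measure (Fin m → Fin n) := Measure.pi fun _ => p.toMeasure
    (m : ℝ) * ∑ k ∈ Finset.univ.filter
        (fun k : Fin n => (3 / m) * Real.log (10 * n / ρ) ≤ (p k).toReal),
        (p k).toReal
      ≤ 4 * ∑ j : Fin m,
          (μ {ω | ∃ j' : Fin m, j' < j ∧ ω j' = ω j}).toReal := by
  intro μ
  obtain ⟨hρ0, hρh⟩ := hρ
  set L := Real.log (10 * n / ρ) with hLdef
  set H := Finset.univ.filter
      (fun k : Fin n => (3 / m) * L ≤ (p k).toReal) with hHdef
  have hmeas : ∀ s : Set (Fin m → Fin n), MeasurableSet s :=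
    fun s => (Set.to_countable s).measurableSet
  have hmpos : (0:ℝ) < m := by exact_mod_cast hm
  have hn1 : (1:ℝ) ≤ n := by exact_mod_cast hn
  have hlog2 : (0.6931471803:ℝ) < Real.log 2 := Real.log_two_gt_d9
  have hlog2' : Real.log 2 < 0.6931471808 := Real.log_two_lt_d9
  have h20 : (16:ℝ) ≤ 10 * n / ρ := by
    rw [le_div_iff₀ hρ0]; nlinarith
  have hL16 : 4 * Real.log 2 ≤ L := by
    have : Real.log 16 ≤ L := Real.log_le_log (by norm_num) h20
    rw [show (16:ℝ) = 2 ^ 4 by norm_num, Real.log_pow] at this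
    push_cast at this; linarith
  have hlog10 : Real.log 10 ≤ 4 * Real.log 2 := by
    have : Real.log 10 ≤ Real.log 16 := Real.log_le_log (by norm_num) (by norm_num)
    rw [show (16:ℝ) = 2 ^ 4 by norm_num, Real.log_pow] at this
    push_cast at this; linarith
  have hq01 : ∀ k : Fin n, 0 ≤ (p k).toReal ∧ (p k).toReal ≤ 1 := by
    intro k
    exact ⟨ENNReal.toReal_nonneg, by
      simpa using ENNReal.toReal_mono (by simp) (p.coe_le_one k)⟩
  -- m ≥ 9
  have hm9 : (9:ℝ) ≤ m := by
    obtain ⟨k0, hk0⟩ := hheavy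
    have h1 : (3 / (m:ℝ)) * L ≤ 1 := hk0.trans (hq01 k0).2
    rw [div_mul_eq_mul_div, div_le_one hmpos] at h1
    by_contra h
    push_neg at h
    have hm8 : (m:ℝ) ≤ 8 := by
      have : m < 9 := by exact_mod_cast h
      have : m ≤ 8 := by omega
      exact_mod_cast this
    nlinarith
  -- exact value of the measure of the basic collision-with-k events
  have hDval : ∀ (j : Fin m) (k : Fin n),
      (μ {ω : Fin m → Fin n | ω j = k ∧ ∃ j' < j, ω j' = k}).toReal
        = (p k).toReal - (1 - (p k).toReal) ^ (j:ℕ) * (p k).toReal := by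
    intro j k
    have hsing : p.toMeasure {k} = p k :=
      PMF.toMeasure_apply_singleton p k (measurableSet_singleton k)
    have hcompl : p.toMeasure ({k}ᶜ) = 1 - p k := by
      rw [measure_compl (measurableSet_singleton k) (measure_ne_top _ _),
        measure_univ, hsing]
    have hE : μ {ω : Fin m → Fin n | ω j = k} = p k := by
      have hset : {ω : Fin m → Fin n | ω j = k}
          = Set.pi Set.univ (fun i => if i = j then ({k} : Set (Fin n)) else Set.univ) := by
        ext ω
        simp only [Set.mem_setOf_eq, Set.mem_pi, Set.mem_univ, true_implies]
        constructor
        · intro h i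
          by_cases hi : i = j
          · subst hi; simpa using h
          · simp [hi]
        · intro h; have := h j; simpa using this
      rw [hset, Measure.pi_pi]
      have heach : ∀ i : Fin m,
          p.toMeasure (if i = j then ({k} : Set (Fin n)) else Set.univ)
            = if i = j then p k else 1 := by
        intro i; by_cases hi : i = j <;> simp [hi, hsing]
      simp [heach, Finset.prod_ite_eq']
    have hF : μ {ω : Fin m → Fin n | ω j = k ∧ ∀ j' < j, ω j' ≠ k}
        = (1 - p k) ^ (j:ℕ) * p k := by
      have hset : {ω : Fin m → Fin n | ω j = k ∧ ∀ j' < j, ω j' ≠ k}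
          = Set.pi Set.univ (fun i => if i = j then ({k} : Set (Fin n))
              else if i < j then ({k}ᶜ : Set (Fin n)) else Set.univ) := by
        ext ω
        simp only [Set.mem_setOf_eq, Set.mem_pi, Set.mem_univ, true_implies]
        constructor
        · rintro ⟨h1, h2⟩ i
          by_cases hi : i = j
          · subst hi; simpa using h1
          · by_cases hi' : i < j
            · simp only [if_neg hi, if_pos hi']
              simpa using h2 i hi'
            · simp [hi, hi']
        · intro h
          refine ⟨?_, ?_⟩
          · have := h j; simpa using this
          · intro j' hj'
            have := h j'
            rw [if_neg (ne_of_lt hj'), if_pos hj'] at this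
            simpa using this
      rw [hset, Measure.pi_pi]
      have heach : ∀ i : Fin m,
          p.toMeasure (if i = j then ({k} : Set (Fin n))
              else if i < j then ({k}ᶜ : Set (Fin n)) else Set.univ)
            = (if i < j then (1 - p k) else 1) * (if i = j then p k else 1) := by
        intro i
        rcases lt_trichotomy i j with h | h | h
        · rw [if_neg (ne_of_lt h), if_pos h, if_pos h, if_neg (ne_of_lt h),
            hcompl, mul_one]
        · subst h; simp [lt_irrefl, hsing]
        · rw [if_neg (ne_of_gt h), if_neg (not_lt.mpr h.le), if_neg (not_lt.mpr h.le),
            if_neg (ne_of_gt h)]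
          simp
      rw [Finset.prod_congr rfl (fun i _ => heach i), Finset.prod_mul_distrib]
      congr 1
      · rw [Finset.prod_ite, Finset.prod_const, Finset.prod_const, one_pow, mul_one]
        congr 1
        rw [show Finset.univ.filter (· < j) = Finset.Iio j from by ext i; simp,
          Fin.card_Iio]
      · simp [Finset.prod_ite_eq']
    have hsub : {ω : Fin m → Fin n | ω j = k ∧ ∀ j' < j, ω j' ≠ k}
        ⊆ {ω : Fin m → Fin n | ω j = k} := fun ω h => h.1
    have hD : {ω : Fin m → Fin n | ω j = k ∧ ∃ j' < j, ω j' = k}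
        = {ω : Fin m → Fin n | ω j = k}
          \ {ω : Fin m → Fin n | ω j = k ∧ ∀ j' < j, ω j' ≠ k} := by
      ext ω
      simp only [Set.mem_setOf_eq, Set.mem_diff]
      constructor
      · rintro ⟨h1, j', hj', h2⟩
        exact ⟨h1, fun hc => hc.2 j' hj' h2⟩
      · rintro ⟨h1, h2⟩
        refine ⟨h1, ?_⟩
        by_contra hc
        push_neg at hc
        exact h2 ⟨h1, hc⟩
    have hle : (1 - p k) ^ (j:ℕ) * p k ≤ p k := by
      calc (1 - p k) ^ (j:ℕ) * p k ≤ 1 ^ (j:ℕ) * p k := by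
            gcongr; exact tsub_le_self
        _ = p k := by rw [one_pow, one_mul]
    rw [hD, measure_diff hsub (hmeas _).nullMeasurableSet (measure_ne_top μ _), hE, hF,
      ENNReal.toReal_sub_of_le hle (PMF.apply_ne_top p k), ENNReal.toReal_mul,
      ENNReal.toReal_pow, ENNReal.toReal_sub_of_le (p.coe_le_one k) (by simp),
      ENNReal.toReal_one]
  -- per-sample lower bound on the collision probability
  have hkey : ∀ j : Fin m,
      ∑ k ∈ H, ((p k).toReal - (1 - (p k).toReal) ^ (j:ℕ) * (p k).toReal)
        ≤ (μ {ω | ∃ j' : Fin m, j' < j ∧ ω j' = ω j}).toReal := by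
    intro j
    have hdisj : (↑H : Set (Fin n)).PairwiseDisjoint
        (fun k => {ω : Fin m → Fin n | ω j = k ∧ ∃ j' < j, ω j' = k}) := by
      intro a _ b _ hab
      refine Set.disjoint_left.mpr ?_
      rintro ω ⟨ha, _⟩ ⟨hb, _⟩
      exact hab (ha.symm.trans hb)
    have hunion : (⋃ k ∈ H, {ω : Fin m → Fin n | ω j = k ∧ ∃ j' < j, ω j' = k})
        ⊆ {ω | ∃ j' : Fin m, j' < j ∧ ω j' = ω j} := by
      intro ω hω
      simp only [Set.mem_iUnion, Set.mem_setOf_eq] at hω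
      obtain ⟨k, _, h1, j', hj', h2⟩ := hω
      exact ⟨j', hj', by rw [h1, h2]⟩
    calc ∑ k ∈ H, ((p k).toReal - (1 - (p k).toReal) ^ (j:ℕ) * (p k).toReal)
        = ∑ k ∈ H, (μ {ω : Fin m → Fin n | ω j = k ∧ ∃ j' < j, ω j' = k}).toReal :=
          Finset.sum_congr rfl fun k _ => (hDval j k).symm
      _ = (∑ k ∈ H, μ {ω : Fin m → Fin n | ω j = k ∧ ∃ j' < j, ω j' = k}).toReal :=
          (ENNReal.toReal_sum fun k _ => measure_ne_top μ _).symm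
      _ = (μ (⋃ k ∈ H, {ω : Fin m → Fin n | ω j = k ∧ ∃ j' < j, ω j' = k})).toReal := by
          rw [measure_biUnion_finset hdisj fun k _ => hmeas _]
      _ ≤ _ := ENNReal.toReal_mono (measure_ne_top μ _) (measure_mono hunion)
  set S := ∑ k ∈ H, (p k).toReal with hSdef
  have hS0 : 0 ≤ S := Finset.sum_nonneg fun k _ => ENNReal.toReal_nonneg
  -- the "late half" indices
  set J := Finset.univ.filter (fun j : Fin m => m / 2 ≤ (j:ℕ)) with hJdef
  have hstep : ∀ j ∈ J, (9/10) * S ≤ (μ {ω | ∃ j' : Fin m, j' < j ∧ ω j' = ω j}).toReal := by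
    intro j hj
    refine le_trans ?_ (hkey j)
    rw [hSdef, Finset.mul_sum]
    refine Finset.sum_le_sum fun k hk => ?_
    have hq := hq01 k
    set q := (p k).toReal
    have hkH : (3 / (m:ℝ)) * L ≤ q := (Finset.mem_filter.mp hk).2
    have hjJ : m / 2 ≤ (j:ℕ) := (Finset.mem_filter.mp hj).2
    have hj2 : (m:ℝ) - 1 ≤ 2 * (j:ℕ) := by
      have : m ≤ 2 * (j:ℕ) + 1 := by omega
      exact_mod_cast by exact_mod_cast (by push_cast; linarith [show ((m:ℝ)) ≤ 2*(j:ℕ)+1 from by exact_mod_cast this] : (m:ℝ) - 1 ≤ 2 * ((j:ℕ):ℝ))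
    have hqm : 3 * L ≤ q * m := by
      rw [div_mul_eq_mul_div, div_le_iff₀ hmpos] at hkH
      linarith
    have hexp : Real.log 10 ≤ q * (j:ℕ) := by
      nlinarith [mul_le_mul_of_nonneg_left hj2 hq.1]
    have hpow : (1 - q) ^ (j:ℕ) ≤ 1 / 10 :=
      aux_pow_le_tenth q (j:ℕ) hq.1 hq.2 hexp
    nlinarith [hq.1]
  have hJcard : (J.card : ℝ) = (m : ℝ) - (m / 2 : ℕ) := by
    have hlt : m / 2 < m := Nat.div_lt_self hm (by norm_num)
    have : J = Finset.Ici (⟨m / 2, hlt⟩ : Fin m) := by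
      ext i
      simp [hJdef, Fin.le_def]
    rw [this, Fin.card_Ici]
    push_cast [Nat.div_le_self]
    ring
  have htot : (J.card : ℝ) * ((9/10) * S) ≤
      ∑ j : Fin m, (μ {ω | ∃ j' : Fin m, j' < j ∧ ω j' = ω j}).toReal := by
    calc (J.card : ℝ) * ((9/10) * S) = ∑ _j ∈ J, (9/10) * S := by
          rw [Finset.sum_const, nsmul_eq_mul]
      _ ≤ ∑ j ∈ J, (μ {ω | ∃ j' : Fin m, j' < j ∧ ω j' = ω j}).toReal :=
          Finset.sum_le_sum hstep
      _ ≤ _ := Finset.sum_le_sum_of_subset_of_nonneg (Finset.subset_univ J)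
          (fun _ _ _ => ENNReal.toReal_nonneg)
  have hhalf : (m:ℝ) / 2 ≤ (J.card : ℝ) := by
    rw [hJcard]
    have : ((m / 2 : ℕ) : ℝ) ≤ (m:ℝ) / 2 := by
      have := Nat.cast_div_le (α := ℝ) (m := m) (n := 2)
      simpa using this
    linarith
  have hfinal := htot
  nlinarith [mul_le_mul_of_nonneg_right hhalf (mul_nonneg (by norm_num : (0:ℝ) ≤ 9/10) hS0)]
end
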